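/- arXiv:2501.12365 — 4 statements merged into one kernel-verified Lean document; each statement's English description precedes it below -/
import Mathlib

section
/- With a nonzero offset d ∈ Z_q added before subsampling, the subsampled Fourier coefficient U_p[j] = (1/B) ∑_{ℓ} f(Mℓ + d) ∏_{m=1}^b ω_{(b)_m}^{-j_m ℓ_m} equals ∑_{k : M^T k = j} F[k] ∏_{i=1}^n ω_{q_i}^{d_i k_i}. -/
/-!
Expand `f` in its Fourier series and swap the two sums. Since `M` is a partial identity, the
character `χ_k` of `Z_q` restricted to `Mℓ + d` is `χ_k(d) ∏_m ω_{b_m}^{ℓ_m k_{sel m}}`, so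
frequency `k` contributes `F[k] χ_k(d)` times the character sum
`∑_ℓ ∏_m ω_{b_m}^{ℓ_m (k_{sel m} - j_m)}` over `∏_m Z_{b_m}`. By orthogonality this sum is `B`
when `Mᵀk = j` and `0` otherwise.
-/

open Complex Finset

namespace ZMod

variable {N : ℕ} [NeZero N]

lemma exp_val_mul_val_eq_stdAddChar (x y : ZMod N) :
    exp (2 * Real.pi * I * (x.val * y.val) / N) = stdAddChar (x * y) := by
  rw [stdAddChar_apply, ← Nat.cast_mul, ← toCircle_natCast, Nat.cast_mul, natCast_zmod_val,
    natCast_zmod_val]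

lemma exp_neg_val_mul_val_eq_stdAddChar (x y : ZMod N) :
    exp (-(2 * Real.pi * I * (x.val * y.val) / N)) = stdAddChar (-(x * y)) := by
  rw [exp_neg, exp_val_mul_val_eq_stdAddChar, AddChar.map_neg_eq_inv]

lemma sum_pi_prod_stdAddChar_mul {κ : Type*} [Fintype κ] [DecidableEq κ] (N : κ → ℕ)
    [∀ m, NeZero (N m)] (c : ∀ m, ZMod (N m)) :
    ∑ ℓ : ∀ m, ZMod (N m), ∏ m, stdAddChar (ℓ m * c m) =
      if c = 0 then ∏ m, (N m : ℂ) else 0 := by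
  rw [← Fintype.prod_sum (fun m (x : ZMod (N m)) => stdAddChar (x * c m))]
  simp_rw [AddChar.sum_mulShift _ (isPrimitive_stdAddChar _), card]
  split_ifs with hc
  · exact prod_congr rfl fun m _ => by simp [congr_fun hc m]
  · obtain ⟨m, hm⟩ := Function.ne_iff.mp hc
    exact prod_eq_zero (mem_univ m) (by simp [show c m ≠ 0 from hm])

end ZMod

/-- `emb` is `ℓ ↦ Mℓ` for the partial-identity matrix `M` whose columns are the coordinate
vectors `e_{sel m}`. -/
def IsPartialIdentity {ι κ : Type*} {N : ι → ℕ} (sel : κ → ι)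
    (emb : (∀ m, ZMod (N (sel m))) → ∀ i, ZMod (N i)) : Prop :=
  ∀ ℓ, (∀ m, emb ℓ (sel m) = ℓ m) ∧ ∀ i, (∀ m, sel m ≠ i) → emb ℓ i = 0

namespace IsPartialIdentity

variable {ι κ : Type*} [Fintype ι] [Fintype κ] {N : ι → ℕ} [∀ i, NeZero (N i)]
  {sel : κ → ι} {emb : (∀ m, ZMod (N (sel m))) → ∀ i, ZMod (N i)}

lemma prod_stdAddChar_mul (hemb : IsPartialIdentity sel emb) (hsel : sel.Injective)
    (ℓ : ∀ m, ZMod (N (sel m))) (k : ∀ i, ZMod (N i)) :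
    ∏ i, ZMod.stdAddChar (emb ℓ i * k i) = ∏ m, ZMod.stdAddChar (ℓ m * k (sel m)) := by
  refine (Fintype.prod_of_injective sel hsel _ _ (fun i hi => ?_) fun m => ?_).symm
  · rw [(hemb ℓ).2 i fun m hm => hi ⟨m, hm⟩, zero_mul, AddChar.map_zero_eq_one]
  · rw [(hemb ℓ).1 m]

lemma sum_prod_stdAddChar_add_mul [DecidableEq κ] (hemb : IsPartialIdentity sel emb)
    (hsel : sel.Injective) (d k : ∀ i, ZMod (N i)) (j : ∀ m, ZMod (N (sel m))) :
    ∑ ℓ, (∏ i, ZMod.stdAddChar ((emb ℓ + d) i * k i)) * ∏ m, ZMod.stdAddChar (-(j m * ℓ m)) =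
      (∏ i, ZMod.stdAddChar (d i * k i)) *
        if ∀ m, k (sel m) = j m then ∏ m, (N (sel m) : ℂ) else 0 := by
  have hshift : ∀ ℓ, (∏ i, ZMod.stdAddChar ((emb ℓ + d) i * k i)) *
      ∏ m, ZMod.stdAddChar (-(j m * ℓ m)) = (∏ i, ZMod.stdAddChar (d i * k i)) *
        ∏ m, ZMod.stdAddChar (ℓ m * (k (sel m) - j m)) := by
    intro ℓ
    simp_rw [Pi.add_apply, add_mul, AddChar.map_add_eq_mul, prod_mul_distrib,
      hemb.prod_stdAddChar_mul hsel, mul_sub, sub_eq_add_neg, AddChar.map_add_eq_mul,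
      prod_mul_distrib, mul_comm (j _)]
    ring
  simp_rw [hshift, ← mul_sum]
  rw [ZMod.sum_pi_prod_stdAddChar_mul]
  simp only [funext_iff, Pi.zero_apply, sub_eq_zero]

end IsPartialIdentity

theorem stmt_2_general (n b t : ℕ) (q : Fin n → ℕ) [∀ i, NeZero (q i)]
    (f F : (∀ i, ZMod (q i)) → ℂ)
    (hf : ∀ m : ∀ i, ZMod (q i), f m =
      ∑ k : ∀ i, ZMod (q i), F k * ∏ i,
        Complex.exp (2 * Real.pi * Complex.I * ((m i).val * (k i).val) / (q i)))
    (sel : Fin b → Fin n) (hsel : ∀ i : Fin b, (sel i : ℕ) = t + i)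
    (emb : (∀ i : Fin b, ZMod (q (sel i))) → (∀ i : Fin n, ZMod (q i)))
    (hemb : ∀ ℓ, (∀ i : Fin b, emb ℓ (sel i) = ℓ i) ∧
      (∀ i' : Fin n, (∀ i : Fin b, sel i ≠ i') → emb ℓ i' = 0))
    (B : ℕ) (hB : B = ∏ i : Fin b, q (sel i))
    (d : ∀ i, ZMod (q i))
    (j : ∀ i : Fin b, ZMod (q (sel i))) :
    (1 / (B : ℂ)) * ∑ ℓ : ∀ i : Fin b, ZMod (q (sel i)), f (emb ℓ + d) *
        ∏ m : Fin b,
          Complex.exp (-(2 * Real.pi * Complex.I * ((j m).val * (ℓ m).val) / (q (sel m))))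
    = ∑ k ∈ Finset.univ.filter (fun k : ∀ i, ZMod (q i) => ∀ i : Fin b, k (sel i) = j i),
        F k * ∏ i,
          Complex.exp (2 * Real.pi * Complex.I * ((d i).val * (k i).val) / (q i)) := by
  have hsel_inj : sel.Injective := fun a a' h =>
    Fin.ext (Nat.add_left_cancel ((hsel a).symm.trans ((congrArg Fin.val h).trans (hsel a'))))
  have hB0 : (B : ℂ) ≠ 0 := by
    rw [hB, Nat.cast_prod]
    exact prod_ne_zero_iff.mpr fun i _ => Nat.cast_ne_zero.mpr (NeZero.ne _)
  simp_rw [hf, ZMod.exp_val_mul_val_eq_stdAddChar, ZMod.exp_neg_val_mul_val_eq_stdAddChar,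
    sum_mul, mul_assoc]
  rw [sum_comm]
  simp_rw [← mul_sum, IsPartialIdentity.sum_prod_stdAddChar_add_mul hemb hsel_inj,
    ← Nat.cast_prod, ← hB, mul_ite, mul_zero, ← sum_filter, mul_sum]
  refine sum_congr rfl fun k _ => ?_
  field_simp

/-- Aliasing identity with an offset `d`: subsampling `f` at `Mℓ + d` multiplies each
hashed Fourier coefficient by the offset signature `∏ i, ω_{q_i}^{d_i k_i}`. -/
theorem stmt_2 (n b t : ℕ) (ht : t + b ≤ n) (q : Fin n → ℕ) [∀ i, NeZero (q i)]
    (f F : (∀ i, ZMod (q i)) → ℂ)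
    (hf : ∀ m : ∀ i, ZMod (q i), f m =
      ∑ k : ∀ i, ZMod (q i), F k * ∏ i,
        Complex.exp (2 * Real.pi * Complex.I * ((m i).val * (k i).val) / (q i)))
    (sel : Fin b → Fin n) (hsel : ∀ i : Fin b, (sel i : ℕ) = t + i)
    (emb : (∀ i : Fin b, ZMod (q (sel i))) → (∀ i : Fin n, ZMod (q i)))
    (hemb : ∀ ℓ, (∀ i : Fin b, emb ℓ (sel i) = ℓ i) ∧
      (∀ i' : Fin n, (∀ i : Fin b, sel i ≠ i') → emb ℓ i' = 0))
    (B : ℕ) (hB : B = ∏ i : Fin b, q (sel i))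
    (d : ∀ i, ZMod (q i))
    (j : ∀ i : Fin b, ZMod (q (sel i))) :
    (1 / (B : ℂ)) * ∑ ℓ : ∀ i : Fin b, ZMod (q (sel i)), f (emb ℓ + d) *
        ∏ m : Fin b,
          Complex.exp (-(2 * Real.pi * Complex.I * ((j m).val * (ℓ m).val) / (q (sel m))))
    = ∑ k ∈ Finset.univ.filter (fun k : ∀ i, ZMod (q i) => ∀ i : Fin b, k (sel i) = j i),
        F k * ∏ i,
          Complex.exp (2 * Real.pi * Complex.I * ((d i).val * (k i).val) / (q i)) :=
  stmt_2_general n b t q f F hf sel hsel emb hemb B hB d j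
end

section
/- If the subsampled coefficients satisfy U_{c,0}[j] = ∑_{k: M^T k = j} F[k] and U_{c,p}[j] = ∑_{k: M^T k = j} F[k] ω_{q_p}^{k_p} for offsets given by the identity matrix, and exactly one k with M^T k = j has F[k] ≠ 0, then |U_{c,p}[j]/U_{c,0}[j]| = 1 for all p = 1,…,n. -/
open Complex Finset

theorem Finset.sum_eq_of_ne_zero_imp_eq {α M : Type*} [AddCommMonoid M] {s : Finset α}
    {f : α → M} {a : α} (ha : a ∈ s) (h : ∀ k ∈ s, f k ≠ 0 → k = a) :
    ∑ k ∈ s, f k = f a :=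
  sum_eq_single_of_mem a ha fun k hk hne => by_contra fun hf => hne (h k hk hf)

theorem Complex.norm_exp_two_pi_I_mul_div (x y : ℝ) :
    ‖exp (2 * Real.pi * I * x / y)‖ = 1 := by
  have harg : (2 * Real.pi * I * x / y : ℂ) = ((2 * Real.pi * x / y : ℝ) : ℂ) * I := by
    push_cast
    ring
  rw [harg, norm_exp_ofReal_mul_I]

/-- Singleton verification in the noiseless case: if exactly one `k` hashed to bin `j`
has a nonzero Fourier coefficient, then `|U_{c,p}[j] / U_{c,0}[j]| = 1` for all `p`. -/
theorem stmt_3 (n b : ℕ) (q : Fin n → ℕ) [∀ i, NeZero (q i)]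
    (F : (∀ i, ZMod (q i)) → ℂ)
    (sel : Fin b → Fin n)
    (j : ∀ i : Fin b, ZMod (q (sel i)))
    (hsingle : ∃! k : ∀ i, ZMod (q i), (∀ i : Fin b, k (sel i) = j i) ∧ F k ≠ 0)
    (U0 : ℂ) (U : Fin n → ℂ)
    (hU0 : U0 = ∑ k ∈ Finset.univ.filter
        (fun k : ∀ i, ZMod (q i) => ∀ i : Fin b, k (sel i) = j i), F k)
    (hU : ∀ p : Fin n, U p = ∑ k ∈ Finset.univ.filter
        (fun k : ∀ i, ZMod (q i) => ∀ i : Fin b, k (sel i) = j i),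
        F k * Complex.exp (2 * Real.pi * Complex.I * ((k p).val) / (q p))) :
    ∀ p : Fin n, ‖U p / U0‖ = 1 := by
  intro p
  obtain ⟨k₀, ⟨hk₀, hF⟩, huniq⟩ := hsingle
  have hmem : k₀ ∈ univ.filter fun k : ∀ i, ZMod (q i) => ∀ i, k (sel i) = j i := by
    simpa using hk₀
  have hsupp : ∀ k ∈ univ.filter (fun k : ∀ i, ZMod (q i) => ∀ i, k (sel i) = j i),
      F k ≠ 0 → k = k₀ :=
    fun k hk hFk => huniq k ⟨(mem_filter.1 hk).2, hFk⟩
  rw [hU p, hU0, sum_eq_of_ne_zero_imp_eq hmem hsupp,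
    sum_eq_of_ne_zero_imp_eq hmem fun k hk h => hsupp k hk (left_ne_zero_of_mul h),
    mul_div_cancel_left₀ _ hF]
  exact_mod_cast norm_exp_two_pi_I_mul_div (k₀ p).val (q p)
end

section
/- Let s, s' ∈ ℂ^P be vectors whose p-th entries are ∏_{i=1}^n ω_{q_i}^{d_{p,i} k_i} and ∏_{i=1}^n ω_{q_i}^{d_{p,i} m_i} respectively, where each offset row d_p is drawn uniformly at random from Z_q and k ≠ m in Z_q. Then each entry of the coordinatewise product y_p = conj(s'_p) s_p has expectation 0, and for any μ₀ > 0, Pr(|⟨s', s⟩|/P ≥ μ₀) ≤ 4 exp(−μ₀² P / 8). -/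
/-!
Write `y(d) = ∏ᵢ ψ(dᵢ (kᵢ - mᵢ))` with `ψ` the standard additive character of `ZMod qᵢ`.
Its sum over `∏ᵢ ZMod qᵢ` factors as a product of character sums, and the factor at a
coordinate where `kᵢ ≠ mᵢ` vanishes because `ψ` is primitive.

Under the uniform law on `Fin P → ∏ᵢ ZMod qᵢ` the rows are independent, so the real and
imaginary parts of `S = ∑ₚ y(dₚ)` are sums of `P` independent mean-zero variables with values in
`[-1, 1]`, to which Hoeffding's inequality applies. Since `‖S‖ ≤ |Re S| + |Im S|`, the event
`‖S‖ ≥ μ₀ P` is covered by four one-sided events at level `μ₀ P / 2`, each of probability at most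
`exp (-(μ₀ P / 2)² / (2 P)) = exp (-μ₀² P / 8)`.
-/

open Complex Finset MeasureTheory ProbabilityTheory

section Hoeffding

variable {Ω : Type*} [MeasurableSpace Ω] [DiscreteMeasurableSpace Ω] [Fintype Ω]

lemma uniformOn_univ_real_eq_card_div (p : Ω → Prop) [DecidablePred p] :
    (uniformOn (Set.univ : Set Ω)).real {x | p x} = #{x | p x} / Fintype.card Ω := by
  rw [measureReal_def, uniformOn_univ, ENNReal.toReal_div, Measure.count_apply_finite'
    (Set.toFinite _) MeasurableSet.of_discrete]
  simp

lemma integral_uniformOn_univ (f : Ω → ℝ) :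
    ∫ ω, f ω ∂uniformOn Set.univ = (∑ ω, f ω) / Fintype.card Ω := by
  rw [integral_fintype (Integrable.of_finite), Finset.sum_div]
  refine Finset.sum_congr rfl fun ω _ => ?_
  simp [measureReal_def, uniformOn_univ, div_eq_inv_mul]

variable [Nonempty Ω]

lemma hasSubgaussianMGF_uniformOn_univ {f : Ω → ℝ} (hf : ∀ ω, |f ω| ≤ 1) (hf0 : ∑ ω, f ω = 0) :
    HasSubgaussianMGF f 1 (uniformOn Set.univ) := by
  have h := hasSubgaussianMGF_of_mem_Icc_of_integral_eq_zero (a := -1) (b := 1)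
    (Measurable.of_discrete (f := f)).aemeasurable (ae_of_all _ fun ω => abs_le.mp (hf ω))
    (by rw [integral_uniformOn_univ, hf0, zero_div])
  norm_num at h
  exact h

theorem uniformOn_univ_real_sum_ge_le (P : ℕ) {f : Ω → ℝ} (hf : ∀ ω, |f ω| ≤ 1)
    (hf0 : ∑ ω, f ω = 0) {ε : ℝ} (hε : 0 ≤ ε) :
    (uniformOn Set.univ).real {D : Fin P → Ω | ε ≤ ∑ p, f (D p)} ≤
      Real.exp (-ε ^ 2 / (2 * P)) := by
  have hpi : (uniformOn Set.univ : Measure (Fin P → Ω)) =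
      Measure.pi fun _ => uniformOn Set.univ := by
    rw [← uniformOn_pi, Set.pi_univ]
  have hindep : iIndepFun (fun p (D : Fin P → Ω) => f (D p)) (uniformOn Set.univ) := by
    rw [hpi]; exact iIndepFun_pi fun _ => Measurable.of_discrete.aemeasurable
  have hsubG : ∀ p, HasSubgaussianMGF (fun D : Fin P → Ω => f (D p)) 1 (uniformOn Set.univ) := by
    intro p
    rw [hpi]
    refine HasSubgaussianMGF.of_map (Y := Function.eval p) (measurable_pi_apply p).aemeasurable ?_
    rw [(measurePreserving_eval _ p).map_eq]
    exact hasSubgaussianMGF_uniformOn_univ hf hf0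
  simpa using HasSubgaussianMGF.measure_sum_ge_le_of_iIndepFun hindep (s := Finset.univ)
    (fun p _ => hsubG p) hε

theorem uniformOn_univ_real_abs_sum_ge_le (P : ℕ) {f : Ω → ℝ} (hf : ∀ ω, |f ω| ≤ 1)
    (hf0 : ∑ ω, f ω = 0) {ε : ℝ} (hε : 0 ≤ ε) :
    (uniformOn Set.univ).real {D : Fin P → Ω | ε ≤ |∑ p, f (D p)|} ≤
      2 * Real.exp (-ε ^ 2 / (2 * P)) := by
  have hpos := uniformOn_univ_real_sum_ge_le P hf hf0 hε
  have hneg := uniformOn_univ_real_sum_ge_le P (f := fun ω => -f ω) (by simpa using hf)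
    (by simp [hf0]) hε
  calc _ ≤ (uniformOn Set.univ).real
        ({D : Fin P → Ω | ε ≤ ∑ p, f (D p)} ∪ {D | ε ≤ ∑ p, -f (D p)}) := by
        refine measureReal_mono fun D hD => ?_
        simpa only [Set.mem_union, Set.mem_ofPred_eq, Finset.sum_neg_distrib] using le_abs.mp hD
    _ ≤ _ := measureReal_union_le _ _
    _ ≤ _ := by linarith

theorem uniformOn_univ_real_norm_sum_ge_le (P : ℕ) {g : Ω → ℂ} (hg : ∀ ω, ‖g ω‖ ≤ 1)
    (hg0 : ∑ ω, g ω = 0) {ε : ℝ} (hε : 0 ≤ ε) :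
    (uniformOn Set.univ).real {D : Fin P → Ω | ε ≤ ‖∑ p, g (D p)‖} ≤
      4 * Real.exp (-ε ^ 2 / (8 * P)) := by
  have hre := uniformOn_univ_real_abs_sum_ge_le P (f := fun ω => (g ω).re) (ε := ε / 2)
    (fun ω => (abs_re_le_norm _).trans (hg ω)) (by rw [← re_sum, hg0, zero_re]) (by positivity)
  have him := uniformOn_univ_real_abs_sum_ge_le P (f := fun ω => (g ω).im) (ε := ε / 2)
    (fun ω => (abs_im_le_norm _).trans (hg ω)) (by rw [← im_sum, hg0, zero_im]) (by positivity)
  have hexp : -(ε / 2) ^ 2 / (2 * P) = -ε ^ 2 / (8 * P) := by ring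
  rw [hexp] at hre him
  calc _ ≤ (uniformOn Set.univ).real ({D : Fin P → Ω | ε / 2 ≤ |∑ p, (g (D p)).re|} ∪
        {D | ε / 2 ≤ |∑ p, (g (D p)).im|}) := by
        refine measureReal_mono fun D hD => ?_
        simp only [Set.mem_union, Set.mem_ofPred_eq, ← re_sum, ← im_sum] at hD ⊢
        by_contra! h
        linarith [norm_le_abs_re_add_abs_im (∑ p, g (D p))]
    _ ≤ _ := measureReal_union_le _ _
    _ ≤ _ := by linarith

end Hoeffding

section Characters

variable {ι : Type*} [Fintype ι] {q : ι → ℕ} [∀ i, NeZero (q i)]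

lemma exp_val_mul_val_eq_stdAddChar {N : ℕ} [NeZero N] (d c : ZMod N) :
    exp (2 * Real.pi * I * (d.val * c.val) / N) = ZMod.stdAddChar (d * c) := by
  have h := ZMod.stdAddChar_coe (N := N) ((d.val * c.val : ℕ) : ℤ)
  push_cast at h
  simpa using h.symm

lemma norm_prod_stdAddChar (d c : ∀ i, ZMod (q i)) :
    ‖∏ i, (ZMod.stdAddChar (d i * c i) : ℂ)‖ = 1 := by
  simp [norm_prod, ZMod.stdAddChar_apply, Circle.norm_coe]

lemma sum_prod_stdAddChar_eq_zero [DecidableEq ι] {c : ∀ i, ZMod (q i)} (hc : c ≠ 0) :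
    ∑ d : ∀ i, ZMod (q i), ∏ i, (ZMod.stdAddChar (d i * c i) : ℂ) = 0 := by
  obtain ⟨i, hi⟩ : ∃ i, c i ≠ 0 := Function.ne_iff.mp hc
  rw [← Fintype.prod_sum fun i d => (ZMod.stdAddChar (d * c i) : ℂ)]
  refine Finset.prod_eq_zero (Finset.mem_univ i) ?_
  simp [AddChar.sum_mulShift _ (ZMod.isPrimitive_stdAddChar _), hi]

end Characters

theorem stmt_12_general (n P : ℕ) (q : Fin n → ℕ) [∀ i, NeZero (q i)]
    (k m : ∀ i, ZMod (q i)) (hkm : k ≠ m) (μ₀ : ℝ) (hμ₀ : 0 < μ₀) :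
    -- mean-zero: the expectation of y over a uniform offset vector is 0
    ((∑ dvec : ∀ i, ZMod (q i), ∏ i,
        Complex.exp (2 * Real.pi * Complex.I *
          ((dvec i).val * ((k i - m i).val)) / (q i))) = 0)
    -- Hoeffding bound over i.i.d. uniform offset rows d_1, …, d_P
    ∧ ((Finset.univ.filter (fun D : Fin P → ∀ i, ZMod (q i) =>
          μ₀ ≤ ‖∑ p : Fin P, ∏ i,
            Complex.exp (2 * Real.pi * Complex.I *
              (((D p) i).val * ((k i - m i).val)) / (q i))‖ / P)).card : ℝ)
        / (Fintype.card (Fin P → ∀ i, ZMod (q i)) : ℝ)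
      ≤ 4 * Real.exp (-(μ₀ ^ 2) * P / 8) := by
  simp_rw [exp_val_mul_val_eq_stdAddChar, ← Pi.sub_apply k m]
  have hmean := sum_prod_stdAddChar_eq_zero (sub_ne_zero.mpr hkm)
  refine ⟨hmean, ?_⟩
  rw [← uniformOn_univ_real_eq_card_div]
  calc _ ≤ (uniformOn Set.univ).real {D : Fin P → ∀ i, ZMod (q i) |
        μ₀ * P ≤ ‖∑ p, ∏ i, (ZMod.stdAddChar (D p i * (k - m) i) : ℂ)‖} :=
        measureReal_mono fun D hD => mul_le_of_le_div₀ (norm_nonneg _) P.cast_nonneg hD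
    _ ≤ 4 * Real.exp (-(μ₀ * P) ^ 2 / (8 * P)) :=
        uniformOn_univ_real_norm_sum_ge_le P (fun d => (norm_prod_stdAddChar d _).le) hmean
          (by positivity)
    _ = 4 * Real.exp (-(μ₀ ^ 2) * P / 8) := by
        rcases eq_or_ne (P : ℝ) 0 with hP | hP
        · simp [hP]
        · congr 2
          field_simp

/-- Offset signatures of distinct indices are uncorrelated: each entry of
`y_p = conj(s'_p)·s_p` has zero mean under a uniform random offset, and the normalized
inner product of the signature vectors satisfies a Hoeffding-type tail bound. -/
theorem stmt_12 (n P : ℕ) (hP : 0 < P) (q : Fin n → ℕ) [∀ i, NeZero (q i)]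
    (hq : ∀ i, 2 ≤ q i)
    (k m : ∀ i, ZMod (q i)) (hkm : k ≠ m) (μ₀ : ℝ) (hμ₀ : 0 < μ₀) :
    -- mean-zero: the expectation of y over a uniform offset vector is 0
    ((∑ dvec : ∀ i, ZMod (q i), ∏ i,
        Complex.exp (2 * Real.pi * Complex.I *
          ((dvec i).val * ((k i - m i).val)) / (q i))) = 0)
    -- Hoeffding bound over i.i.d. uniform offset rows d_1, …, d_P
    ∧ ((Finset.univ.filter (fun D : Fin P → ∀ i, ZMod (q i) =>
          μ₀ ≤ ‖∑ p : Fin P, ∏ i,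
            Complex.exp (2 * Real.pi * Complex.I *
              (((D p) i).val * ((k i - m i).val)) / (q i))‖ / P)).card : ℝ)
        / (Fintype.card (Fin P → ∀ i, ZMod (q i)) : ℝ)
      ≤ 4 * Real.exp (-(μ₀ ^ 2) * P / 8) :=
  stmt_12_general n P q k m hkm μ₀ hμ₀
end

section
/- Multinomial concentration: let Z_1, …, Z_P be i.i.d. random variables on {0, 1, …, q−1} with distribution p = (p_0, …, p_{q−1}), and let p̂ be the empirical distribution (p̂_a = (1/P)·#{p : Z_p = a}). Then Pr(‖p − p̂‖₂ ≥ ε) ≤ 2 exp(−ε² P / (2q)). Consequently, if p_0 − p_i ≥ ε for all i ≠ 0, the probability that the empirical mode (argmax_a p̂_a) differs from 0 is at most 2 exp(−ε² P / (2q)). -/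
/-!
If `‖p - p̂‖₂ ≥ ε`, then, since `∑ a, (p̂ a - p a) = 0`, the set `B = {a | p a ≤ p̂ a}` satisfies
`p̂(B) - p(B) ≥ ε / √2`. The frequency of `B` is an average of `P` independent `[0, 1]`-valued
samples, so by Hoeffding's inequality this has probability at most `exp (-ε² P)`. A union bound
over the `2 ^ q` subsets gives `2 ^ q exp (-ε² P)`, and together with the trivial bound `1` this
is at most `2 exp (-ε² P / q)`. For the mode, `p̂ 0 ≤ p̂ a` and `p 0 - p a ≥ ε` force
`‖p - p̂‖₂² ≥ ε² / 2`, so the same estimate with `ε² / 2` in place of `ε²` applies.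
-/

open Finset Real MeasureTheory ProbabilityTheory

lemma measureReal_pi_sum_ge_le_of_mem_Icc {α ι : Type*} [MeasurableSpace α] [Fintype ι]
    (μ : Measure α) [IsProbabilityMeasure μ] {f : α → ℝ} (hf : Measurable f)
    (hf01 : ∀ a, f a ∈ Set.Icc 0 1) {δ : ℝ} (hδ : 0 ≤ δ) :
    (Measure.pi fun _ : ι => μ).real {ω | Fintype.card ι * (μ[f] + δ) ≤ ∑ t, f (ω t)}
      ≤ exp (-2 * Fintype.card ι * δ ^ 2) := by
  set ν := Measure.pi fun _ : ι => μ
  have hindep : iIndepFun (fun t (ω : ι → α) => f (ω t) - μ[f]) ν :=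
    iIndepFun_pi fun _ => (hf.sub_const _).aemeasurable
  have hsubG (t : ι) :
      HasSubgaussianMGF (fun ω : ι → α => f (ω t) - μ[f]) ((‖(1 : ℝ) - 0‖₊ / 2) ^ 2) ν := by
    have hmean : ν[fun ω => f (ω t)] = μ[f] := by
      rw [← (measurePreserving_eval (fun _ : ι => μ) t).map_eq,
        integral_map (measurable_pi_apply t).aemeasurable hf.aestronglyMeasurable]
    simpa only [hmean] using hasSubgaussianMGF_of_mem_Icc (μ := ν) (X := fun ω => f (ω t))
      (hf.comp (measurable_pi_apply t)).aemeasurable (ae_of_all _ fun ω => hf01 _)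
  have hoeffding := HasSubgaussianMGF.measure_sum_ge_le_of_iIndepFun hindep (s := univ)
    (fun t _ => hsubG t) (ε := Fintype.card ι * δ) (by positivity)
  simp only [sum_sub_distrib, sum_const, card_univ, nsmul_eq_mul, le_sub_iff_add_le']
    at hoeffding
  convert hoeffding using 3
  · ext ω
    ring_nf
  · rcases (Fintype.card ι).eq_zero_or_pos with hn | hn
    · simp [hn]
    · norm_num
      field_simp
      ring

lemma measureReal_pi_finset_eq_sum_prod {α ι : Type*} [MeasurableSpace α]
    [MeasurableSingletonClass α] [Fintype ι] (μ : Measure α) [IsFiniteMeasure μ]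
    (s : Finset (ι → α)) :
    (Measure.pi fun _ : ι => μ).real s = ∑ ω ∈ s, ∏ t, μ.real {ω t} := by
  rw [← sum_measureReal_singleton]
  simp [measureReal_def, ENNReal.toReal_prod]

section Empirical

variable {α ι : Type*} [DecidableEq α] [Fintype ι]

noncomputable def empiricalFreq (ω : ι → α) (a : α) : ℝ := #{t | ω t = a} / Fintype.card ι

lemma sum_empiricalFreq (ω : ι → α) (B : Finset α) :
    ∑ a ∈ B, empiricalFreq ω a = #{t | ω t ∈ B} / Fintype.card ι := by
  simp only [empiricalFreq, ← sum_div]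
  rw [card_eq_sum_card_fiberwise (f := ω) (t := B) fun t ht => by simpa using ht]
  push_cast
  congr 1
  refine sum_congr rfl fun a ha => ?_
  congr 2
  ext t
  simp only [mem_filter, mem_univ, true_and]
  grind

lemma sum_empiricalFreq_univ [Fintype α] [Nonempty ι] (ω : ι → α) :
    ∑ a, empiricalFreq ω a = 1 := by
  rw [sum_empiricalFreq]
  simp

lemma measureReal_pi_sum_empiricalFreq_ge_le [MeasurableSpace α] [MeasurableSingletonClass α]
    (μ : Measure α) [IsProbabilityMeasure μ] [Nonempty ι] (B : Finset α) {δ : ℝ} (hδ : 0 ≤ δ) :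
    (Measure.pi fun _ : ι => μ).real {ω | μ.real B + δ ≤ ∑ a ∈ B, empiricalFreq ω a}
      ≤ exp (-2 * Fintype.card ι * δ ^ 2) := by
  have hn : (0 : ℝ) < Fintype.card ι := by exact_mod_cast Fintype.card_pos
  have hcount (ω : ι → α) : (#{t | ω t ∈ B} : ℝ) = ∑ t, (B : Set α).indicator 1 (ω t) := by
    simp [Set.indicator_apply, sum_boole]
  have hmean : μ[(B : Set α).indicator 1] = μ.real B := integral_indicator_one B.measurableSet
  have hIcc (a : α) : (B : Set α).indicator 1 a ∈ Set.Icc (0 : ℝ) 1 := by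
    by_cases ha : a ∈ B <;> simp [ha]
  convert measureReal_pi_sum_ge_le_of_mem_Icc (ι := ι) μ
    (measurable_one.indicator B.measurableSet) hIcc hδ using 3
  ext ω
  rw [sum_empiricalFreq, hmean, ← hcount, le_div_iff₀ hn, mul_comm]

end Empirical

lemma exists_finset_sum_sq_le_two_mul_sq_sum {α : Type*} [Fintype α] (x : α → ℝ)
    (hx : ∑ a, x a = 0) :
    ∃ B : Finset α, 0 ≤ ∑ a ∈ B, x a ∧ ∑ a, x a ^ 2 ≤ 2 * (∑ a ∈ B, x a) ^ 2 := by
  classical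
  refine ⟨univ.filter fun a => 0 ≤ x a, sum_nonneg fun a ha => (mem_filter.1 ha).2, ?_⟩
  have hpos : ∑ a with 0 ≤ x a, x a ^ 2 ≤ (∑ a with 0 ≤ x a, x a) ^ 2 :=
    sum_sq_le_sq_sum_of_nonneg fun a ha => (mem_filter.1 ha).2
  have hneg : ∑ a with ¬ 0 ≤ x a, (-x a) ^ 2 ≤ (∑ a with ¬ 0 ≤ x a, -x a) ^ 2 :=
    sum_sq_le_sq_sum_of_nonneg fun a ha => by linarith [not_le.1 (mem_filter.1 ha).2]
  have hbalance : ∑ a with ¬ 0 ≤ x a, x a = -∑ a with 0 ≤ x a, x a := by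
    linarith [sum_filter_add_sum_filter_not univ (fun a => 0 ≤ x a) x]
  rw [sum_neg_distrib, hbalance, neg_neg] at hneg
  simp only [neg_sq] at hneg
  rw [← sum_filter_add_sum_filter_not univ (fun a => 0 ≤ x a) (fun a => x a ^ 2)]
  linarith

lemma min_one_two_pow_mul_exp_le {q : ℕ} (hq : 1 ≤ q) (S : ℝ) :
    min 1 (2 ^ q * exp (-S)) ≤ 2 * exp (-S / q) := by
  have hq' : (1 : ℝ) ≤ q := by exact_mod_cast hq
  have hl : 0 < log 2 := log_pos one_lt_two
  by_cases hS : S ≤ q * log 2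
  · refine (min_le_left _ _).trans ?_
    have : -log 2 ≤ -S / q := by
      rw [neg_div, neg_le_neg_iff, div_le_iff₀ (by positivity)]
      linarith
    calc (1 : ℝ) = 2 * exp (-log 2) := by rw [exp_neg, exp_log two_pos]; norm_num
      _ ≤ 2 * exp (-S / q) := by gcongr
  · refine (min_le_right _ _).trans ?_
    have key : 0 ≤ ((q : ℝ) - 1) * (S / q - log 2) := by
      apply mul_nonneg (by linarith)
      rw [sub_nonneg, le_div_iff₀ (by positivity)]
      linarith
    have hexpand : ((q : ℝ) - 1) * (S / q - log 2) = S - S / q - q * log 2 + log 2 := by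
      field_simp
      ring
    calc 2 ^ q * exp (-S) = exp (q * log 2 - S) := by
          rw [exp_sub, exp_nat_mul, exp_log two_pos, exp_neg, div_eq_mul_inv]
      _ ≤ exp (log 2 - S / q) := exp_le_exp.2 (by linarith)
      _ = 2 * exp (-S / q) := by
          rw [exp_sub, exp_log two_pos, neg_div, exp_neg, div_eq_mul_inv]

section Concentration

variable {α ι : Type*} [Fintype α] [DecidableEq α] [MeasurableSpace α]
  [MeasurableSingletonClass α] (μ : Measure α) [IsProbabilityMeasure μ] [Fintype ι] [Nonempty ι]

lemma measureReal_pi_le_sum_sq_sub_empiricalFreq_le_two_pow {η : ℝ} (hη : 0 ≤ η) :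
    (Measure.pi fun _ : ι => μ).real {ω | η ≤ ∑ a, (μ.real {a} - empiricalFreq ω a) ^ 2}
      ≤ 2 ^ Fintype.card α * exp (-η * Fintype.card ι) := by
  set δ := √(η / 2)
  have hcover : {ω : ι → α | η ≤ ∑ a, (μ.real {a} - empiricalFreq ω a) ^ 2} ⊆
      ⋃ B : Finset α, {ω | μ.real B + δ ≤ ∑ a ∈ B, empiricalFreq ω a} := by
    intro ω (hω : η ≤ ∑ a, (μ.real {a} - empiricalFreq ω a) ^ 2)
    obtain ⟨B, hB0, hB⟩ := exists_finset_sum_sq_le_two_mul_sq_sum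
      (fun a => empiricalFreq ω a - μ.real {a})
      (by simp [sum_sub_distrib, sum_empiricalFreq_univ])
    refine Set.mem_iUnion.2 ⟨B, ?_⟩
    have hδ : δ ≤ ∑ a ∈ B, (empiricalFreq ω a - μ.real {a}) := by
      rw [sqrt_le_left hB0]
      have hω' : η ≤ ∑ a, (empiricalFreq ω a - μ.real {a}) ^ 2 := by
        simpa only [sub_sq_comm (μ.real {_})] using hω
      linarith
    rw [sum_sub_distrib, sum_measureReal_singleton] at hδ
    show μ.real B + δ ≤ _
    linarith
  calc _ ≤ ∑ B : Finset α, (Measure.pi fun _ : ι => μ).real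
          {ω | μ.real B + δ ≤ ∑ a ∈ B, empiricalFreq ω a} :=
        (measureReal_mono hcover).trans (measureReal_iUnion_fintype_le _)
    _ ≤ ∑ _B : Finset α, exp (-2 * Fintype.card ι * δ ^ 2) :=
        sum_le_sum fun B _ => measureReal_pi_sum_empiricalFreq_ge_le μ B (sqrt_nonneg _)
    _ = _ := by
        rw [sum_const, card_univ, Fintype.card_finset, nsmul_eq_mul, sq_sqrt (by positivity)]
        push_cast
        ring_nf

theorem measureReal_pi_le_sum_sq_sub_empiricalFreq_le {η : ℝ} (hη : 0 ≤ η) :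
    (Measure.pi fun _ : ι => μ).real {ω | η ≤ ∑ a, (μ.real {a} - empiricalFreq ω a) ^ 2}
      ≤ 2 * exp (-η * Fintype.card ι / Fintype.card α) := by
  have : Nonempty α := nonempty_of_isProbabilityMeasure μ
  refine (le_min measureReal_le_one
    (measureReal_pi_le_sum_sq_sub_empiricalFreq_le_two_pow μ hη)).trans ?_
  simpa [neg_mul] using min_one_two_pow_mul_exp_le (Fintype.card_pos (α := α)) (η * Fintype.card ι)

end Concentration

lemma sq_div_two_le_sum_sq_sub {α : Type*} [Fintype α] (x y : α → ℝ) {a b : α} (hab : a ≠ b)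
    {ε : ℝ} (hε : 0 ≤ ε) (hx : ε ≤ x a - x b) (hy : y a ≤ y b) :
    ε ^ 2 / 2 ≤ ∑ c, (x c - y c) ^ 2 := by
  classical
  have hpair : (x a - y a) ^ 2 + (x b - y b) ^ 2 ≤ ∑ c, (x c - y c) ^ 2 := by
    rw [← sum_pair (f := fun c => (x c - y c) ^ 2) hab]
    exact sum_le_sum_of_subset_of_nonneg (subset_univ _) fun _ _ _ => sq_nonneg _
  have hgap : ε ≤ (x a - y a) - (x b - y b) := by linarith
  nlinarith [sq_nonneg ((x a - y a) + (x b - y b)), mul_le_mul hgap hgap hε (hε.trans hgap)]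

lemma exists_isProbabilityMeasure_measureReal_singleton {α : Type*} [Fintype α]
    [MeasurableSpace α] [MeasurableSingletonClass α] (p : α → ℝ) (hp0 : ∀ a, 0 ≤ p a)
    (hp1 : ∑ a, p a = 1) :
    ∃ μ : Measure α, IsProbabilityMeasure μ ∧ ∀ a, μ.real {a} = p a := by
  have hsum : ∑ a, ENNReal.ofReal (p a) = 1 := by
    rw [← ENNReal.ofReal_sum_of_nonneg fun a _ => hp0 a, hp1, ENNReal.ofReal_one]
  refine ⟨(PMF.ofFintype _ hsum).toMeasure, inferInstance, fun a => ?_⟩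
  rw [measureReal_def, PMF.toMeasure_apply_singleton _ _ (measurableSet_singleton a),
    PMF.ofFintype_apply, ENNReal.toReal_ofReal (hp0 a)]

/-- Multinomial concentration: for `P` i.i.d. samples from a distribution `p` on a `q`-ary
alphabet, the empirical distribution `p̂` satisfies
`Pr(‖p − p̂‖₂ ≥ ε) ≤ 2 exp(−ε² P/(2q))`; consequently, if `p_0` exceeds every other
`p_i` by at least `ε`, the empirical mode fails to be `0` with the same probability. -/
theorem stmt_17 (q : ℕ) (hq : 2 ≤ q) (P : ℕ) (hP : 1 ≤ P)
    (p : Fin q → ℝ) (hp0 : ∀ a, 0 ≤ p a) (hp1 : ∑ a, p a = 1)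
    (ε : ℝ) (hε : 0 < ε)
    (phat : (Fin P → Fin q) → Fin q → ℝ)
    (hphat : ∀ ω a, phat ω a = ((Finset.univ.filter (fun t => ω t = a)).card : ℝ) / P) :
    (∑ ω ∈ Finset.univ.filter (fun ω : Fin P → Fin q =>
          ε ≤ Real.sqrt (∑ a, (p a - phat ω a) ^ 2)), ∏ t, p (ω t))
      ≤ 2 * Real.exp (-(ε ^ 2) * P / (2 * q))
    ∧ ((∀ i : Fin q, i ≠ ⟨0, by omega⟩ → ε ≤ p ⟨0, by omega⟩ - p i) →
        (∑ ω ∈ Finset.univ.filter (fun ω : Fin P → Fin q =>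
            ∃ a : Fin q, a ≠ ⟨0, by omega⟩ ∧ phat ω ⟨0, by omega⟩ ≤ phat ω a),
          ∏ t, p (ω t))
        ≤ 2 * Real.exp (-(ε ^ 2) * P / (2 * q))) := by
  obtain ⟨μ, _, hμ⟩ := exists_isProbabilityMeasure_measureReal_singleton p hp0 hp1
  set ν := Measure.pi fun _ : Fin P => μ
  have : Nonempty (Fin P) := ⟨⟨0, hP⟩⟩
  have hprob (E : (Fin P → Fin q) → Prop) [DecidablePred E] :
      ∑ ω with E ω, ∏ t, p (ω t) = ν.real {ω | E ω} := by
    simp_rw [← hμ, ← measureReal_pi_finset_eq_sum_prod, coe_filter, mem_univ, true_and]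
    rfl
  have hconc {η : ℝ} (hη : 0 ≤ η) :
      ν.real {ω | η ≤ ∑ a, (p a - phat ω a) ^ 2} ≤ 2 * exp (-η * P / q) := by
    have hphat' : phat = empiricalFreq := by ext ω a; simp [hphat, empiricalFreq]
    simpa [hphat', hμ] using measureReal_pi_le_sum_sq_sub_empiricalFreq_le μ hη (ι := Fin P)
  refine ⟨?_, fun hmode => ?_⟩
  · rw [hprob]
    calc _ ≤ ν.real {ω | ε ^ 2 ≤ ∑ a, (p a - phat ω a) ^ 2} :=
          measureReal_mono fun ω hω => (le_sqrt hε.le (sum_nonneg fun _ _ => sq_nonneg _)).1 hω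
      _ ≤ 2 * exp (-(ε ^ 2) * P / q) := hconc (sq_nonneg ε)
      _ ≤ _ := by
          rw [neg_mul, neg_div, neg_div]
          gcongr
          linarith
  · rw [hprob]
    calc _ ≤ ν.real {ω | ε ^ 2 / 2 ≤ ∑ a, (p a - phat ω a) ^ 2} :=
          measureReal_mono <| by
            rintro ω ⟨a, ha, hle⟩
            exact sq_div_two_le_sum_sq_sub p (phat ω) (Ne.symm ha) hε.le (hmode a ha) hle
      _ ≤ _ := (hconc (by positivity)).trans_eq (by ring_nf)
end
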